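/- Let G be a group, F a field of characteristic ≠ 2, V a 2-dimensional irreducible representation of G over F, and χ : G → F^× a character. If the representation Sym²(V) ⊗ χ has a nonzero G-invariant vector, then the character χ·det(V) satisfies (χ·det V)² = 1. -/

import Mathlib

open TensorProduct

section Aux

variable {F V : Type*} [Field F] [AddCommGroup V] [Module F V] [FiniteDimensional F V]

/-- The natural equivalence `V ⊗ V ≃ Hom(V*, V)`. -/
noncomputable def auxPhi : V ⊗[F] V ≃ₗ[F] (Module.Dual F V →ₗ[F] V) :=
  (TensorProduct.congr (Module.evalEquiv F V) (LinearEquiv.refl F V)).trans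
    (dualTensorHomEquiv F (Module.Dual F V) V)

lemma auxPhi_tmul (x y : V) (f : Module.Dual F V) :
    (auxPhi (F := F) (V := V) (x ⊗ₜ y)) f = f x • y := by
  simp [auxPhi, dualTensorHomEquiv]

lemma auxPhi_map (A B : V →ₗ[F] V) (t : V ⊗[F] V) :
    auxPhi (F := F) (V := V) (TensorProduct.map A B t) =
      B ∘ₗ (auxPhi (F := F) (V := V) t) ∘ₗ Module.Dual.transpose (R := F) A := by
  induction t with
  | zero => simp
  | tmul x y =>
      ext f
      simp [auxPhi_tmul, Module.Dual.transpose_apply]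
  | add a b ha hb =>
      ext f
      simp [map_add, ha, hb]

lemma aux_det_transpose (u : V →ₗ[F] V) :
    LinearMap.det (Module.Dual.transpose (R := F) u) = LinearMap.det u := by
  let b := Module.finBasis F V
  rw [← LinearMap.det_toMatrix b.dualBasis (Module.Dual.transpose (R := F) u),
    LinearMap.toMatrix_transpose, Matrix.det_transpose, LinearMap.det_toMatrix]

end Aux

/-- If `V` is a 2-dimensional irreducible representation of `G` over a field `F` of
characteristic `≠ 2` and the twist `Sym²(V) ⊗ χ` has a nonzero `G`-invariant vector —
realized here as a nonzero symmetric tensor `t ∈ V ⊗ V` with `(ρ(g) ⊗ ρ(g)) t = χ(g)⁻¹ • t`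
for all `g` — then the character `χ · det(V)` is quadratic: `(χ(g) · det ρ(g))² = 1`. -/
theorem stmt_12 {G F V : Type*} [Group G] [Field F] [AddCommGroup V] [Module F V]
    (h2 : (2 : F) ≠ 0)
    (ρ : Representation F G V)
    (hdim : Module.finrank F V = 2)
    (hirr : ∀ W : Submodule F V, (∀ (g : G), ∀ x ∈ W, ρ g x ∈ W) → W = ⊥ ∨ W = ⊤)
    (χ : G →* Fˣ)
    (t : V ⊗[F] V) (ht : t ≠ 0)
    (hsymm : (TensorProduct.comm F V V) t = t)
    (hinv : ∀ g : G, (TensorProduct.map (ρ g) (ρ g)) t = ((χ g)⁻¹ : Fˣ) • t) :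
    ∀ g : G, ((χ g : F) * LinearMap.det (ρ g)) ^ 2 = 1 := by
  have hfd : FiniteDimensional F V := FiniteDimensional.of_finrank_pos (by omega)
  set T : Module.Dual F V →ₗ[F] V := auxPhi t with hT
  -- equivariance relation
  have hrel : ∀ g : G, ρ g ∘ₗ T ∘ₗ Module.Dual.transpose (R := F) (ρ g)
      = (((χ g)⁻¹ : Fˣ) : F) • T := by
    intro g
    rw [hT, ← auxPhi_map (ρ g) (ρ g) t, hinv g, Units.smul_def, map_smul]
  have hrel' : ∀ (g : G) (f : Module.Dual F V),
      ρ g (T (Module.Dual.transpose (R := F) (ρ g) f)) = (((χ g)⁻¹ : Fˣ) : F) • T f := by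
    intro g f
    have := congrArg (fun u : Module.Dual F V →ₗ[F] V => u f) (hrel g)
    simpa using this
  -- T is nonzero
  have hT0 : T ≠ 0 := by
    intro h
    apply ht
    have : auxPhi (F := F) (V := V) t = auxPhi (F := F) (V := V) 0 := by
      rw [map_zero]; exact h
    exact (auxPhi (F := F) (V := V)).injective this
  -- range of T is invariant
  have hWinv : ∀ (g : G), ∀ x ∈ LinearMap.range T, ρ g x ∈ LinearMap.range T := by
    intro g x hx
    obtain ⟨f, rfl⟩ := hx
    have hf : Module.Dual.transpose (R := F) (ρ g) (Module.Dual.transpose (R := F) (ρ g⁻¹) f)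
        = f := by
      ext v
      have hv : (ρ g⁻¹) ((ρ g) v) = v := by
        rw [← Module.End.mul_apply, ← map_mul, inv_mul_cancel, map_one, Module.End.one_apply]
      simp [Module.Dual.transpose_apply, hv]
    refine ⟨(((χ g)⁻¹ : Fˣ) : F) • Module.Dual.transpose (R := F) (ρ g⁻¹) f, ?_⟩
    rw [map_smul, ← hrel' g (Module.Dual.transpose (R := F) (ρ g⁻¹) f), hf]
  have hWtop : LinearMap.range T = ⊤ := by
    rcases hirr (LinearMap.range T) hWinv with h | h
    · exact absurd (LinearMap.range_eq_bot.mp h) hT0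
    · exact h
  -- transport to an endomorphism of V
  obtain ⟨e⟩ : Nonempty (Module.Dual F V ≃ₗ[F] V) :=
    ⟨LinearEquiv.ofFinrankEq _ _ Subspace.dual_finrank_eq⟩
  set T' : V →ₗ[F] V := T ∘ₗ e.symm.toLinearMap with hT'
  have hT'surj : Function.Surjective T' := by
    intro x
    have : x ∈ LinearMap.range T := hWtop ▸ Submodule.mem_top
    obtain ⟨f, rfl⟩ := this
    exact ⟨e f, by simp [hT']⟩
  have hT'bij : Function.Bijective T' :=
    ⟨LinearMap.injective_iff_surjective.mpr hT'surj, hT'surj⟩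
  have hdet' : LinearMap.det T' ≠ 0 := by
    have := LinearEquiv.isUnit_det' (LinearEquiv.ofBijective T' hT'bij)
    have hc : ((LinearEquiv.ofBijective T' hT'bij : V ≃ₗ[F] V) : V →ₗ[F] V) = T' := by
      ext x; rfl
    simpa [hc] using this.ne_zero
  intro g
  -- the determinant identity
  have hcomp : ρ g ∘ₗ T' ∘ₗ ((e : Module.Dual F V →ₗ[F] V) ∘ₗ
      Module.Dual.transpose (R := F) (ρ g) ∘ₗ e.symm.toLinearMap)
      = (((χ g)⁻¹ : Fˣ) : F) • T' := by
    ext x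
    simp only [LinearMap.comp_apply, LinearMap.smul_apply, hT', LinearEquiv.coe_coe]
    rw [e.symm_apply_apply]
    exact hrel' g (e.symm x)
  have hconj : LinearMap.det ((e : Module.Dual F V →ₗ[F] V) ∘ₗ
      Module.Dual.transpose (R := F) (ρ g) ∘ₗ e.symm.toLinearMap)
      = LinearMap.det (ρ g) := by
    rw [LinearMap.det_conj (Module.Dual.transpose (R := F) (ρ g)) e, aux_det_transpose]
  have key := congrArg LinearMap.det hcomp
  rw [LinearMap.det_comp, LinearMap.det_comp, hconj, LinearMap.det_smul, hdim] at key
  have key2 : LinearMap.det (ρ g) ^ 2 * LinearMap.det T'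
      = (((χ g)⁻¹ : Fˣ) : F) ^ 2 * LinearMap.det T' := by rw [← key]; ring
  have hd2 : LinearMap.det (ρ g) ^ 2 = (((χ g)⁻¹ : Fˣ) : F) ^ 2 :=
    mul_right_cancel₀ hdet' key2
  rw [mul_pow, hd2, Units.val_inv_eq_inv_val, ← mul_pow,
    mul_inv_cancel₀ (Units.ne_zero (χ g)), one_pow]
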